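/- arXiv:1705.10518 — 4 statements merged into one kernel-verified Lean document; each statement's English description precedes it below -/
import Mathlib

section
/- Let (E_r^{p,q}, d_r) be a spectral sequence of finite-dimensional vector spaces concentrated in 0 ≤ p,q ≤ 3 with E_2^{3,0} = E_2^{0,3} = 0, converging to a limit vanishing in total degrees 1 through 5. Then d_2 induces isomorphisms E_2^{0,1} ≅ E_2^{2,0}, E_2^{0,2} ≅ E_2^{2,1}, E_2^{1,2} ≅ E_2^{3,1}, and E_2^{1,3} ≅ E_2^{3,2}. -/
/-!
Vanishing propagates backwards through the pages: if `E_{r+1}^{p,q} = 0` and the source of the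
incoming and the target of the outgoing `d_r` vanish, then `E_r^{p,q} = 0`. In columns
`0 ≤ p ≤ 3` every `d_r` with `r ≥ 4` leaves the square, so the vanishing of `E_5` in total
degrees `1, …, 5` passes to `E_4`, and then to `E_3`, because the relevant `d_3` end outside the
square or at the corners `E_3^{3,0}`, `E_3^{0,3}`, which vanish with `E_2^{3,0}`, `E_2^{0,3}`.
Finally `d_2 : E_2^{p,q} → E_2^{p+2,q-1}` is injective when `E_3^{p,q} = 0` and surjective when
`E_3^{p+2,q-1} = 0`, the neighbouring `d_2` leaving the square.
-/

def mcast {M N : ModuleCat ℂ} (h : M = N) : M →ₗ[ℂ] N := h ▸ LinearMap.id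

/-- A cohomological spectral sequence of complex vector spaces: pages `E r p q` for
`r ≥ 1`, differentials `d_r : E_r^{p,q} → E_r^{p+r,q-r+1}` squaring to zero, and an
identification of each next page with the cohomology (kernel modulo image) of the
previous one. -/
structure SpectralSeq where
  E : ℕ → ℤ → ℤ → ModuleCat ℂ
  d : ∀ r : ℕ, ∀ p q : ℤ, E r p q ⟶ E r (p + r) (q - r + 1)
  d_sq : ∀ r p q, (d r (p + r) (q - r + 1)).hom ∘ₗ (d r p q).hom = 0
  page : ∀ r : ℕ, 1 ≤ r → ∀ p q : ℤ,
    Nonempty ((E (r + 1) p q) ≃ₗ[ℂ]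
      (LinearMap.ker (d r p q).hom ⧸
        (LinearMap.range
            ((mcast (by congr 1 <;> ring)) ∘ₗ (d r (p - r) (q + r - 1)).hom :
              E r (p - r) (q + r - 1) →ₗ[ℂ] E r p q)).comap
          (LinearMap.ker (d r p q).hom).subtype))

theorem mcast_injective {M N : ModuleCat ℂ} (h : M = N) : Function.Injective (mcast h) := by
  subst h
  exact Function.injective_id

theorem subsingleton_of_sum_finrank_eq_zero {K ι : Type*} [DivisionRing K] (M : ι → ModuleCat K)
    [∀ i, FiniteDimensional K (M i)] {s : Finset ι} (hs : ∑ i ∈ s, Module.finrank K (M i) = 0)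
    {i : ι} (hi : i ∈ s) : Subsingleton (M i) :=
  Module.finrank_zero_iff.mp (Finset.sum_eq_zero_iff.mp hs i hi)

theorem LinearMap.ker_le_range_of_subsingleton_quotient {R A B C : Type*} [Ring R]
    [AddCommGroup A] [Module R A] [AddCommGroup B] [Module R B] [AddCommGroup C] [Module R C]
    (f : A →ₗ[R] B) (g : B →ₗ[R] C)
    [Subsingleton (ker g ⧸ (range f).comap (ker g).subtype)] : ker g ≤ range f := by
  intro b hb
  have h : Submodule.Quotient.mk (p := (range f).comap (ker g).subtype) ⟨b, hb⟩ = 0 :=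
    Subsingleton.elim _ _
  simpa using (Submodule.Quotient.mk_eq_zero _).mp h

namespace SpectralSeq

variable (S : SpectralSeq) {r : ℕ} {p q : ℤ}

theorem ker_le_range (hr : 1 ≤ r) (h : Subsingleton (S.E (r + 1) p q)) :
    LinearMap.ker (S.d r p q).hom ≤
      LinearMap.range (mcast (by congr 1 <;> ring) ∘ₗ (S.d r (p - r) (q + r - 1)).hom) := by
  obtain ⟨e⟩ := S.page r hr p q
  have := e.symm.toEquiv.subsingleton
  exact LinearMap.ker_le_range_of_subsingleton_quotient _ _

theorem subsingleton_succ (hr : 1 ≤ r) (h : Subsingleton (S.E r p q)) :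
    Subsingleton (S.E (r + 1) p q) := by
  obtain ⟨e⟩ := S.page r hr p q
  exact e.toEquiv.subsingleton_congr.mpr (Submodule.Quotient.mk_surjective _).subsingleton

theorem subsingleton_of_subsingleton_succ (hr : 1 ≤ r)
    (hin : Subsingleton (S.E r (p - r) (q + r - 1)))
    (hout : Subsingleton (S.E r (p + r) (q - r + 1)))
    (h : Subsingleton (S.E (r + 1) p q)) : Subsingleton (S.E r p q) := by
  refine subsingleton_of_forall_eq 0 fun x ↦ ?_
  have hx : x ∈ LinearMap.ker (S.d r p q).hom := Subsingleton.elim _ _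
  obtain ⟨y, rfl⟩ := S.ker_le_range hr h hx
  rw [Subsingleton.elim y 0, map_zero]

theorem subsingleton_of_subsingleton_succ_of_lt {N : ℤ}
    (hcol : ∀ r p q, p < 0 ∨ N < p → Subsingleton (S.E r p q)) (hr : N < r) (hp : 0 ≤ p)
    (hpN : p ≤ N) (h : Subsingleton (S.E (r + 1) p q)) : Subsingleton (S.E r p q) :=
  S.subsingleton_of_subsingleton_succ (by omega) (hcol _ _ _ (by omega)) (hcol _ _ _ (by omega)) h

theorem injective_d (hr : 1 ≤ r) (hin : Subsingleton (S.E r (p - r) (q + r - 1)))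
    (h : Subsingleton (S.E (r + 1) p q)) : Function.Injective (S.d r p q) := by
  refine (injective_iff_map_eq_zero (S.d r p q).hom).mpr fun x hx ↦ ?_
  obtain ⟨y, rfl⟩ := S.ker_le_range hr h hx
  rw [Subsingleton.elim y 0, map_zero]

theorem surjective_d (hr : 1 ≤ r) (h : Subsingleton (S.E (r + 1) (p + r) (q - r + 1)))
    (hout : Subsingleton (S.E r (p + r + r) (q - r + 1 - r + 1))) :
    Function.Surjective (S.d r p q) := by
  obtain ⟨p, rfl⟩ : ∃ p', p = p' - r := ⟨p + r, by ring⟩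
  obtain ⟨q, rfl⟩ : ∃ q', q = q' + r - 1 := ⟨q - r + 1, by ring⟩
  rw [sub_add_cancel, show q + r - 1 - r + 1 = q by ring] at h hout
  intro y
  have hy : mcast (by congr 1 <;> ring) y ∈ LinearMap.ker (S.d r p q).hom :=
    Subsingleton.elim _ _
  obtain ⟨x, hx⟩ := S.ker_le_range hr h hy
  exact ⟨x, mcast_injective _ hx⟩

theorem bijective_d (hr : 1 ≤ r) (hin : Subsingleton (S.E r (p - r) (q + r - 1)))
    (h : Subsingleton (S.E (r + 1) p q)) (h' : Subsingleton (S.E (r + 1) (p + r) (q - r + 1)))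
    (hout : Subsingleton (S.E r (p + r + r) (q - r + 1 - r + 1))) :
    Function.Bijective (S.d r p q) :=
  ⟨S.injective_d hr hin h, S.surjective_d hr h' hout⟩

end SpectralSeq

/-- Let `(E_r^{p,q}, d_r)` be a spectral sequence of finite-dimensional
complex vector spaces concentrated in `0 ≤ p,q ≤ 3` with `E_2^{3,0} = E_2^{0,3} = 0`,
converging to a limit (realized, thanks to the concentration, by the fifth page
`E_5 = E_∞`) vanishing in total degrees 1 through 5. Then `d_2` induces isomorphisms
`E_2^{0,1} ≅ E_2^{2,0}`, `E_2^{0,2} ≅ E_2^{2,1}`, `E_2^{1,2} ≅ E_2^{3,1}`, and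
`E_2^{1,3} ≅ E_2^{3,2}` (that is, `d_2` is bijective on those spots). This applies to
the Frölicher spectral sequence of a hypothetical complex structure on `S^6`. -/
theorem stmt8 (S : SpectralSeq)
    (hconc : ∀ (r : ℕ) (p q : ℤ), ¬(0 ≤ p ∧ p ≤ 3 ∧ 0 ≤ q ∧ q ≤ 3) →
      Subsingleton (S.E r p q))
    (hfd : ∀ (r : ℕ) (p q : ℤ), FiniteDimensional ℂ (S.E r p q))
    (hE230 : Subsingleton (S.E 2 3 0)) (hE203 : Subsingleton (S.E 2 0 3))
    (hlim : ∀ k : ℤ, 1 ≤ k → k ≤ 5 →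
      ∑ p ∈ Finset.Icc (0 : ℤ) 3, Module.finrank ℂ (S.E 5 p (k - p)) = 0) :
    Function.Bijective (S.d 2 0 1) ∧ Function.Bijective (S.d 2 0 2) ∧
    Function.Bijective (S.d 2 1 2) ∧ Function.Bijective (S.d 2 1 3) := by
  have hE4 : ∀ p q : ℤ, 0 ≤ p → p ≤ 3 → 1 ≤ p + q → p + q ≤ 5 → Subsingleton (S.E 4 p q) := by
    intro p q hp0 hp3 hk1 hk5
    refine S.subsingleton_of_subsingleton_succ_of_lt (N := 3)
      (fun r p q h ↦ hconc r p q (by omega)) (by norm_num) hp0 hp3 ?_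
    have := hfd 5
    simpa using subsingleton_of_sum_finrank_eq_zero (fun i ↦ S.E 5 i (p + q - i))
      (hlim (p + q) hk1 hk5) (Finset.mem_Icc.mpr ⟨hp0, hp3⟩)
  have hE3 : ∀ p q : ℤ, 0 ≤ p → p ≤ 3 → 1 ≤ p + q → p + q ≤ 5 →
      Subsingleton (S.E 3 (p - 3) (q + 2)) → Subsingleton (S.E 3 (p + 3) (q - 2)) →
      Subsingleton (S.E 3 p q) := by
    intro p q hp0 hp3 hk1 hk5 hin hout
    refine S.subsingleton_of_subsingleton_succ (r := 3) (by norm_num) ?_ ?_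
      (hE4 p q hp0 hp3 hk1 hk5)
    · convert hin using 3 <;> push_cast <;> ring
    · convert hout using 3 <;> push_cast <;> ring
  have hE3_corner : ∀ p q : ℤ, ¬(0 ≤ p ∧ p ≤ 3 ∧ 0 ≤ q ∧ q ≤ 3) ∨ (p = 3 ∧ q = 0) ∨
      (p = 0 ∧ q = 3) → Subsingleton (S.E 3 p q) := by
    rintro p q (h | ⟨rfl, rfl⟩ | ⟨rfl, rfl⟩)
    exacts [hconc 3 p q h, S.subsingleton_succ one_le_two hE230,
      S.subsingleton_succ one_le_two hE203]
  refine ⟨?_, ?_, ?_, ?_⟩ <;> refine S.bijective_d one_le_two ?_ ?_ ?_ ?_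
  -- the `E_2` neighbours lie outside the square, the `E_3` ends are among the eight spots
  all_goals first
    | exact hconc _ _ _ (by omega)
    | exact hE3 _ _ (by omega) (by omega) (by omega) (by omega) (hE3_corner _ _ (by omega))
        (hE3_corner _ _ (by omega))
end

section
/- Suppose nonnegative integers h^{p,q} (Hodge numbers satisfying Serre duality, h^{0,0}=1, h^{3,0}=0, h^{0,1}=h^{0,2}+1) and second-page dimensions h_2^{p,q} satisfy: h_2^{1,0}=h_2^{1,1}=h_2^{2,2}=h_2^{2,3}=h_2^{3,0}=h_2^{0,3}=0, h_2^{0,0}=h_2^{3,3}=1, the d_2-isomorphism relations h_2^{0,1}=h_2^{2,0}, h_2^{0,2}=h_2^{2,1}, h_2^{1,2}=h_2^{3,1}, h_2^{1,3}=h_2^{3,2}, and the row-wise Euler characteristic equalities Σ_p (-1)^p h^{p,q} = Σ_p (-1)^p h_2^{p,q} for q = 0,1,2,3. Then h_2^{0,1} = h_2^{2,0} = h_2^{1,3} = h_2^{3,2} and h_2^{0,2} = h_2^{1,2} = h_2^{2,1} = h_2^{3,1}; in particular h_2^{p,q} = h_2^{3-p,3-q} for all p,q (Serre-type symmetry on the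 second page). -/
/-!
Serre duality `h^{p,q} = h^{3-p,3-q}` together with `(-1)^{3-p} = -(-1)^p` makes the alternating
row sums of the first page satisfy `χ_q + χ_{3-q} = 0`. By the row-wise Euler characteristic
identities the same holds on the second page. Adding rows `0` and `3` there, the vanishings and
`h_2^{0,0} = h_2^{3,3}` leave `h_2^{2,0} = h_2^{1,3}`; adding rows `1` and `2`, the `d₂`-relations
leave `2 (h_2^{0,2} - h_2^{1,2}) = 0`.
-/

open Finset

def rowEuler (f : ℕ → ℕ → ℕ) (n q : ℕ) : ℤ :=
  ∑ p ∈ range (n + 1), (-1 : ℤ) ^ p * f p q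

theorem rowEuler_sub_eq_neg_one_pow_mul {f : ℕ → ℕ → ℕ} {n q : ℕ}
    (hf : ∀ p q, p ≤ n → q ≤ n → f p q = f (n - p) (n - q)) (hq : q ≤ n) :
    rowEuler f n (n - q) = (-1) ^ n * rowEuler f n q := by
  have hsign : ∀ p ≤ n, (-1 : ℤ) ^ (n - p) = (-1) ^ n * (-1) ^ p := fun p hp => by
    rw [← Nat.sub_add_cancel hp, pow_add, Nat.add_sub_cancel, mul_assoc, ← pow_add,
      ← two_mul, pow_mul, neg_one_sq, one_pow, mul_one]
  calc rowEuler f n (n - q)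
      = ∑ p ∈ range (n + 1), (-1 : ℤ) ^ (n - (n - p)) * f (n - p) q := by
        refine sum_congr rfl fun p hp => ?_
        have hp : p ≤ n := Nat.lt_succ_iff.mp (mem_range.mp hp)
        rw [hf p (n - q) hp (Nat.sub_le n q), Nat.sub_sub_self hp, Nat.sub_sub_self hq]
    _ = ∑ p ∈ range (n + 1), (-1 : ℤ) ^ (n - p) * f p q :=
        sum_range_reflect (fun p => (-1 : ℤ) ^ (n - p) * f p q) (n + 1)
    _ = (-1) ^ n * rowEuler f n q := by
        rw [rowEuler, mul_sum]
        refine sum_congr rfl fun p hp => ?_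
        rw [hsign p (Nat.lt_succ_iff.mp (mem_range.mp hp)), mul_assoc]

theorem rowEuler_add_rowEuler_sub_of_odd {f : ℕ → ℕ → ℕ} {n q : ℕ}
    (hf : ∀ p q, p ≤ n → q ≤ n → f p q = f (n - p) (n - q)) (hq : q ≤ n) (hn : Odd n) :
    rowEuler f n q + rowEuler f n (n - q) = 0 := by
  rw [rowEuler_sub_eq_neg_one_pow_mul hf hq, hn.neg_one_pow]
  ring

theorem stmt10_general (h h2 : ℕ → ℕ → ℕ)
    (hserre : ∀ p q, p ≤ 3 → q ≤ 3 → h p q = h (3 - p) (3 - q))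
    (h2_10 : h2 1 0 = 0) (h2_11 : h2 1 1 = 0) (h2_22 : h2 2 2 = 0) (h2_23 : h2 2 3 = 0)
    (h2_30 : h2 3 0 = 0) (h2_03 : h2 0 3 = 0)
    (h2_00 : h2 0 0 = 1) (h2_33 : h2 3 3 = 1)
    (hd2a : h2 0 1 = h2 2 0) (hd2b : h2 0 2 = h2 2 1)
    (hd2c : h2 1 2 = h2 3 1) (hd2d : h2 1 3 = h2 3 2)
    (heuler : ∀ q, q ≤ 3 →
      ∑ p ∈ Finset.range 4, (-1 : ℤ) ^ p * (h p q : ℤ) =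
      ∑ p ∈ Finset.range 4, (-1 : ℤ) ^ p * (h2 p q : ℤ)) :
    (h2 0 1 = h2 2 0 ∧ h2 2 0 = h2 1 3 ∧ h2 1 3 = h2 3 2) ∧
    (h2 0 2 = h2 1 2 ∧ h2 1 2 = h2 2 1 ∧ h2 2 1 = h2 3 1) ∧
    (∀ p q, p ≤ 3 → q ≤ 3 → h2 p q = h2 (3 - p) (3 - q)) := by
  have heuler' : ∀ q ≤ 3, rowEuler h 3 q = rowEuler h2 3 q := heuler
  have hrows : ∀ q ≤ 3, rowEuler h2 3 q + rowEuler h2 3 (3 - q) = 0 := fun q hq => by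
    rw [← heuler' q hq, ← heuler' (3 - q) (Nat.sub_le 3 q)]
    exact rowEuler_add_rowEuler_sub_of_odd hserre hq (by decide)
  have rows03 := hrows 0 (by norm_num)
  have rows12 := hrows 1 (by norm_num)
  simp only [rowEuler, sum_range_succ, sum_range_zero] at rows03 rows12
  norm_num at rows03 rows12
  have h20_13 : h2 2 0 = h2 1 3 := by omega
  have h02_12 : h2 0 2 = h2 1 2 := by omega
  refine ⟨⟨hd2a, h20_13, hd2d⟩, ⟨h02_12, by omega, by omega⟩, fun p q hp hq => ?_⟩
  interval_cases p <;> interval_cases q <;> simp only [Nat.reduceSub] <;> omega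

/-- Suppose nonnegative integers `h p q` (Hodge numbers of a hypothetical
complex structure on `S^6`, satisfying Serre duality, `h^{0,0}=1`, `h^{3,0}=0`,
`h^{0,1}=h^{0,2}+1`) and second-page dimensions `h2 p q` of the Frölicher spectral sequence
satisfy the vanishings `h2^{1,0}=h2^{1,1}=h2^{2,2}=h2^{2,3}=h2^{3,0}=h2^{0,3}=0`,
`h2^{0,0}=h2^{3,3}=1`, the `d₂`-isomorphism relations `h2^{0,1}=h2^{2,0}`,
`h2^{0,2}=h2^{2,1}`, `h2^{1,2}=h2^{3,1}`, `h2^{1,3}=h2^{3,2}`, and the row-wise Euler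
characteristic equalities `Σ_p (-1)^p h^{p,q} = Σ_p (-1)^p h2^{p,q}` for `q = 0,1,2,3`.
Then `h2^{0,1} = h2^{2,0} = h2^{1,3} = h2^{3,2}` and
`h2^{0,2} = h2^{1,2} = h2^{2,1} = h2^{3,1}`; in particular `h2^{p,q} = h2^{3-p,3-q}`
for all `0 ≤ p,q ≤ 3` (Serre-type symmetry on the second page). -/
theorem stmt10 (h h2 : ℕ → ℕ → ℕ)
    (hserre : ∀ p q, p ≤ 3 → q ≤ 3 → h p q = h (3 - p) (3 - q))
    (h00 : h 0 0 = 1) (h30 : h 3 0 = 0) (h01 : h 0 1 = h 0 2 + 1)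
    (h2_10 : h2 1 0 = 0) (h2_11 : h2 1 1 = 0) (h2_22 : h2 2 2 = 0) (h2_23 : h2 2 3 = 0)
    (h2_30 : h2 3 0 = 0) (h2_03 : h2 0 3 = 0)
    (h2_00 : h2 0 0 = 1) (h2_33 : h2 3 3 = 1)
    (hd2a : h2 0 1 = h2 2 0) (hd2b : h2 0 2 = h2 2 1)
    (hd2c : h2 1 2 = h2 3 1) (hd2d : h2 1 3 = h2 3 2)
    (heuler : ∀ q, q ≤ 3 →
      ∑ p ∈ Finset.range 4, (-1 : ℤ) ^ p * (h p q : ℤ) =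
      ∑ p ∈ Finset.range 4, (-1 : ℤ) ^ p * (h2 p q : ℤ)) :
    (h2 0 1 = h2 2 0 ∧ h2 2 0 = h2 1 3 ∧ h2 1 3 = h2 3 2) ∧
    (h2 0 2 = h2 1 2 ∧ h2 1 2 = h2 2 1 ∧ h2 2 1 = h2 3 1) ∧
    (∀ p q, p ≤ 3 → q ≤ 3 → h2 p q = h2 (3 - p) (3 - q)) :=
  stmt10_general h h2 hserre h2_10 h2_11 h2_22 h2_23 h2_30 h2_03 h2_00 h2_33 hd2a hd2b hd2c hd2d
    heuler
end

section
/- Under the same hypotheses as the second-page symmetry result (Hodge numbers of a hypothetical complex S^6 with the row-wise Euler characteristic equalities and the vanishing/isomorphism pattern on E_2), one has h_2^{0,1} = h^{1,2} − h^{1,1} + 1. In particular h^{1,2} − h^{1,1} + 1 ≥ 0, and the Frölicher spectral sequence degenerates at E_2 in bidegree (0,1) (i.e. h_2^{0,1} = 0) if and only if h^{1,2} = h^{1,1} − 1. -/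
/-!
Serre duality on a compact complex threefold makes the row Euler characteristics
`χ_q = Σ_p (-1)^p h^{p,q}` antisymmetric, `χ_{3-q} = -χ_q`, and since the Frölicher spectral
sequence preserves them the same holds on `E₂`. Pairing the rows `0, 3` and `1, 2` of the
prescribed `E₂` pattern forces `h₂^{0,2} = h₂^{1,2}`, so that `χ_1 = h₂^{0,1}`; on the
other hand Serre duality and `h^{0,1} = h^{0,2} + 1` give `χ_1 = h^{1,2} - h^{1,1} + 1`.
-/

open Finset

def rowEulerChar (n : ℕ) (f : ℕ → ℕ → ℕ) (q : ℕ) : ℤ :=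
  ∑ p ∈ range (n + 1), (-1 : ℤ) ^ p * f p q

def SerreDual (n : ℕ) (f : ℕ → ℕ → ℕ) : Prop :=
  ∀ p q, p ≤ n → q ≤ n → f p q = f (n - p) (n - q)

theorem rowEulerChar_sub_of_serreDual {n q : ℕ} {f : ℕ → ℕ → ℕ} (hf : SerreDual n f)
    (hq : q ≤ n) : rowEulerChar n f (n - q) = (-1) ^ n * rowEulerChar n f q := by
  rw [rowEulerChar, ← sum_range_reflect, rowEulerChar, mul_sum]
  refine sum_congr rfl fun p hp => ?_
  have hpn : p ≤ n := Nat.lt_succ_iff.mp (mem_range.mp hp)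
  have hsign : (-1 : ℤ) ^ n = (-1) ^ (n - p) * (-1) ^ p := by
    rw [← pow_add, Nat.sub_add_cancel hpn]
  rw [add_tsub_cancel_right, hf (n - p) (n - q) (Nat.sub_le n p) (Nat.sub_le n q),
    Nat.sub_sub_self hpn, Nat.sub_sub_self hq, hsign, mul_assoc, ← mul_assoc ((-1 : ℤ) ^ p),
    ← pow_add, Even.neg_one_pow ⟨p, rfl⟩, one_mul]

theorem rowEulerChar_add_sub_eq_zero {n q : ℕ} {f : ℕ → ℕ → ℕ} (hn : Odd n)
    (hf : SerreDual n f) (hq : q ≤ n) : rowEulerChar n f q + rowEulerChar n f (n - q) = 0 := by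
  rw [rowEulerChar_sub_of_serreDual hf hq, hn.neg_one_pow]
  ring

/-- The shape of the `E₂` page of the Frölicher spectral sequence of a complex structure on `S^6`:
`e p q = dim E₂^{p,q}`. -/
structure IsS6SecondPage (e : ℕ → ℕ → ℕ) : Prop where
  e10 : e 1 0 = 0
  e11 : e 1 1 = 0
  e22 : e 2 2 = 0
  e23 : e 2 3 = 0
  e30 : e 3 0 = 0
  e03 : e 0 3 = 0
  e00 : e 0 0 = 1
  e33 : e 3 3 = 1
  e01_eq_e20 : e 0 1 = e 2 0
  e02_eq_e21 : e 0 2 = e 2 1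
  e12_eq_e31 : e 1 2 = e 3 1
  e13_eq_e32 : e 1 3 = e 3 2

theorem IsS6SecondPage.rowEulerChar_one {e : ℕ → ℕ → ℕ} (he : IsS6SecondPage e)
    (hχ : ∀ q ≤ 3, rowEulerChar 3 e q + rowEulerChar 3 e (3 - q) = 0) :
    rowEulerChar 3 e 1 = e 0 1 := by
  obtain ⟨e10, e11, e22, e23, e30, e03, e00, e33, e01, e02, e12, e13⟩ := he
  have h03 := hχ 0 (by norm_num)
  have h12 := hχ 1 (by norm_num)
  simp only [rowEulerChar, sum_range_succ, sum_range_zero] at h03 h12 ⊢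
  norm_num at h03 h12 ⊢
  omega

theorem rowEulerChar_three_one {h : ℕ → ℕ → ℕ} (hserre : SerreDual 3 h)
    (h01 : h 0 1 = h 0 2 + 1) : rowEulerChar 3 h 1 = (h 1 2 : ℤ) - h 1 1 + 1 := by
  have h21 : h 2 1 = h 1 2 := hserre 2 1 (by norm_num) (by norm_num)
  have h31 : h 3 1 = h 0 2 := hserre 3 1 (by norm_num) (by norm_num)
  simp only [rowEulerChar, sum_range_succ, sum_range_zero]
  push_cast [h01, h21, h31]
  ring

theorem stmt11_general (h h2 : ℕ → ℕ → ℕ)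
    (hserre : ∀ p q, p ≤ 3 → q ≤ 3 → h p q = h (3 - p) (3 - q))
    (h01 : h 0 1 = h 0 2 + 1)
    (h2_10 : h2 1 0 = 0) (h2_11 : h2 1 1 = 0) (h2_22 : h2 2 2 = 0) (h2_23 : h2 2 3 = 0)
    (h2_30 : h2 3 0 = 0) (h2_03 : h2 0 3 = 0)
    (h2_00 : h2 0 0 = 1) (h2_33 : h2 3 3 = 1)
    (hd2a : h2 0 1 = h2 2 0) (hd2b : h2 0 2 = h2 2 1)
    (hd2c : h2 1 2 = h2 3 1) (hd2d : h2 1 3 = h2 3 2)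
    (heuler : ∀ q, q ≤ 3 →
      ∑ p ∈ Finset.range 4, (-1 : ℤ) ^ p * (h p q : ℤ) =
      ∑ p ∈ Finset.range 4, (-1 : ℤ) ^ p * (h2 p q : ℤ)) :
    (h2 0 1 : ℤ) = (h 1 2 : ℤ) - (h 1 1 : ℤ) + 1 ∧
    (0 : ℤ) ≤ (h 1 2 : ℤ) - (h 1 1 : ℤ) + 1 ∧
    (h2 0 1 = 0 ↔ h 1 2 + 1 = h 1 1) := by
  have hE : ∀ q ≤ 3, rowEulerChar 3 h q = rowEulerChar 3 h2 q := heuler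
  have hpage : IsS6SecondPage h2 := ⟨h2_10, h2_11, h2_22, h2_23, h2_30, h2_03, h2_00, h2_33,
    hd2a, hd2b, hd2c, hd2d⟩
  have hχ : ∀ q ≤ 3, rowEulerChar 3 h2 q + rowEulerChar 3 h2 (3 - q) = 0 := fun q hq => by
    rw [← hE q hq, ← hE (3 - q) (Nat.sub_le 3 q)]
    exact rowEulerChar_add_sub_eq_zero (by decide) hserre hq
  have key : (h2 0 1 : ℤ) = h 1 2 - h 1 1 + 1 := by
    rw [← rowEulerChar_three_one hserre h01, hE 1 (by norm_num), hpage.rowEulerChar_one hχ]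
  exact ⟨key, key ▸ Int.natCast_nonneg _, by omega⟩

/-- Under the same hypotheses as the second-page symmetry result for a
hypothetical complex structure on `S^6` (Hodge numbers `h p q` with Serre duality,
`h^{0,0}=1`, `h^{3,0}=0`, `h^{0,1}=h^{0,2}+1`; second-page dimensions `h2 p q` with the
vanishing/isomorphism pattern; and the row-wise Euler characteristic equalities), one has
`h2^{0,1} = h^{1,2} − h^{1,1} + 1`. In particular `h^{1,2} − h^{1,1} + 1 ≥ 0`, and the
Frölicher spectral sequence degenerates at `E₂` in bidegree `(0,1)` (i.e. `h2^{0,1} = 0`)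
if and only if `h^{1,2} = h^{1,1} − 1`. -/
theorem stmt11 (h h2 : ℕ → ℕ → ℕ)
    (hserre : ∀ p q, p ≤ 3 → q ≤ 3 → h p q = h (3 - p) (3 - q))
    (h00 : h 0 0 = 1) (h30 : h 3 0 = 0) (h01 : h 0 1 = h 0 2 + 1)
    (h2_10 : h2 1 0 = 0) (h2_11 : h2 1 1 = 0) (h2_22 : h2 2 2 = 0) (h2_23 : h2 2 3 = 0)
    (h2_30 : h2 3 0 = 0) (h2_03 : h2 0 3 = 0)
    (h2_00 : h2 0 0 = 1) (h2_33 : h2 3 3 = 1)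
    (hd2a : h2 0 1 = h2 2 0) (hd2b : h2 0 2 = h2 2 1)
    (hd2c : h2 1 2 = h2 3 1) (hd2d : h2 1 3 = h2 3 2)
    (heuler : ∀ q, q ≤ 3 →
      ∑ p ∈ Finset.range 4, (-1 : ℤ) ^ p * (h p q : ℤ) =
      ∑ p ∈ Finset.range 4, (-1 : ℤ) ^ p * (h2 p q : ℤ)) :
    (h2 0 1 : ℤ) = (h 1 2 : ℤ) - (h 1 1 : ℤ) + 1 ∧
    (0 : ℤ) ≤ (h 1 2 : ℤ) - (h 1 1 : ℤ) + 1 ∧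
    (h2 0 1 = 0 ↔ h 1 2 + 1 = h 1 1) :=
  stmt11_general h h2 hserre h01 h2_10 h2_11 h2_22 h2_23 h2_30 h2_03 h2_00 h2_33 hd2a hd2b hd2c hd2d
    heuler
end

section
/- Suppose the Hodge numbers of a hypothetical complex structure X on S^6 satisfy Serre duality, h^{0,0}=1, h^{3,0}=0, the second-page relation h_2^{2,1}=h_2^{3,1} with E_2^{1,1}=0. Then h^{1,1}(X) ≥ h^{1,2}(X) − h^{0,2}(X). -/
/-! Serre duality identifies `h^{1,2}` and `h^{0,2}` with `h^{2,1} = dim E₁^{2,1}` and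
`h^{3,1} = dim E₁^{3,1}`. In the complex `E₁^{1,1} → E₁^{2,1} → E₁^{3,1}` rank–nullity gives
`h₂^{2,1} - h₂^{3,1} = h^{2,1} - h^{3,1} - rank d₁`, so the relation `h₂^{2,1} = h₂^{3,1}`
forces `h^{2,1} - h^{3,1} = rank d₁ ≤ h^{1,1}`. -/

open Module LinearMap

section ComplexOfVectorSpaces

variable {K V₁ V₂ V₃ : Type*} [DivisionRing K]
  [AddCommGroup V₁] [Module K V₁] [AddCommGroup V₂] [Module K V₂] [AddCommGroup V₃] [Module K V₃]

theorem finrank_homology_add_finrank_range [FiniteDimensional K V₂]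
    (d₁ : V₁ →ₗ[K] V₂) (d₂ : V₂ →ₗ[K] V₃) (hd : d₂ ∘ₗ d₁ = 0) :
    finrank K (ker d₂ ⧸ (range d₁).comap (ker d₂).subtype) + finrank K (range d₁)
      = finrank K (ker d₂) := by
  have hle : range d₁ ≤ ker d₂ := range_le_ker_iff.mpr hd
  rw [← (Submodule.comapSubtypeEquivOfLe hle).finrank_eq]
  exact Submodule.finrank_quotient_add_finrank _

theorem finrank_le_of_finrank_homology_eq_finrank_cokernel
    [FiniteDimensional K V₁] [FiniteDimensional K V₂] [FiniteDimensional K V₃]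
    (d₁ : V₁ →ₗ[K] V₂) (d₂ : V₂ →ₗ[K] V₃) (hd : d₂ ∘ₗ d₁ = 0)
    (hrow : finrank K (ker d₂ ⧸ (range d₁).comap (ker d₂).subtype)
      = finrank K (V₃ ⧸ range d₂)) :
    finrank K V₂ ≤ finrank K V₁ + finrank K V₃ := by
  have hH := finrank_homology_add_finrank_range d₁ d₂ hd
  have hcoker := (range d₂).finrank_quotient_add_finrank
  have hrankNullity := finrank_range_add_finrank_ker d₂
  have hrank := finrank_range_le d₁
  omega

end ComplexOfVectorSpaces

theorem stmt14_general (V1 V2 V3 : Type*)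
    [AddCommGroup V1] [Module ℂ V1] [FiniteDimensional ℂ V1]
    [AddCommGroup V2] [Module ℂ V2] [FiniteDimensional ℂ V2]
    [AddCommGroup V3] [Module ℂ V3] [FiniteDimensional ℂ V3]
    (d1 : V1 →ₗ[ℂ] V2) (d2 : V2 →ₗ[ℂ] V3)
    (hc2 : d2 ∘ₗ d1 = 0)
    (h : ℕ → ℕ → ℕ)
    (hserre : ∀ p q, p ≤ 3 → q ≤ 3 → h p q = h (3 - p) (3 - q))
    (hV1 : h 1 1 = Module.finrank ℂ V1)
    (hV2 : h 2 1 = Module.finrank ℂ V2) (hV3 : h 3 1 = Module.finrank ℂ V3)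
    (h2row : Module.finrank ℂ
        ((LinearMap.ker d2) ⧸ (LinearMap.range d1).comap (LinearMap.ker d2).subtype)
      = Module.finrank ℂ (V3 ⧸ LinearMap.range d2)) :
    (h 1 1 : ℤ) ≥ (h 1 2 : ℤ) - (h 0 2 : ℤ) := by
  have h12 : h 1 2 = h 2 1 := hserre 1 2 (by norm_num) (by norm_num)
  have h02 : h 0 2 = h 3 1 := hserre 0 2 (by norm_num) (by norm_num)
  have hdim := finrank_le_of_finrank_homology_eq_finrank_cokernel d1 d2 hc2 h2row
  omega

/-- Suppose the Hodge numbers `h p q` of a hypothetical complex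
structure `X` on `S^6` satisfy Serre duality, `h^{0,0}=1`, `h^{3,0}=0`, and consider the
`q = 1` row `0 → E₁^{0,1} → E₁^{1,1} → E₁^{2,1} → E₁^{3,1} → 0` of the first page of the
Frölicher spectral sequence (modelled by finite-dimensional complex vector spaces
`V0, V1, V2, V3` with differentials `d0, d1, d2` and `h^{p,1} = dim V_p`), with the
second-page vanishing `E₂^{1,1} = 0` (exactness at `V1`) and the second-page relation
`h₂^{2,1} = h₂^{3,1}`. Then `h^{1,1}(X) ≥ h^{1,2}(X) − h^{0,2}(X)`. -/
theorem stmt14 (V0 V1 V2 V3 : Type*)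
    [AddCommGroup V0] [Module ℂ V0] [FiniteDimensional ℂ V0]
    [AddCommGroup V1] [Module ℂ V1] [FiniteDimensional ℂ V1]
    [AddCommGroup V2] [Module ℂ V2] [FiniteDimensional ℂ V2]
    [AddCommGroup V3] [Module ℂ V3] [FiniteDimensional ℂ V3]
    (d0 : V0 →ₗ[ℂ] V1) (d1 : V1 →ₗ[ℂ] V2) (d2 : V2 →ₗ[ℂ] V3)
    (hc1 : d1 ∘ₗ d0 = 0) (hc2 : d2 ∘ₗ d1 = 0)
    (h : ℕ → ℕ → ℕ)
    (hserre : ∀ p q, p ≤ 3 → q ≤ 3 → h p q = h (3 - p) (3 - q))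
    (h00 : h 0 0 = 1) (h30 : h 3 0 = 0)
    (hV0 : h 0 1 = Module.finrank ℂ V0) (hV1 : h 1 1 = Module.finrank ℂ V1)
    (hV2 : h 2 1 = Module.finrank ℂ V2) (hV3 : h 3 1 = Module.finrank ℂ V3)
    (hE211 : LinearMap.ker d1 = LinearMap.range d0)
    (h2row : Module.finrank ℂ
        ((LinearMap.ker d2) ⧸ (LinearMap.range d1).comap (LinearMap.ker d2).subtype)
      = Module.finrank ℂ (V3 ⧸ LinearMap.range d2)) :
    (h 1 1 : ℤ) ≥ (h 1 2 : ℤ) - (h 0 2 : ℤ) :=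
  stmt14_general V1 V2 V3 d1 d2 hc2 h hserre hV1 hV2 hV3 h2row
end
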